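/- arXiv:0910.5500 — 4 statements merged into one kernel-verified Lean document; each statement's English description precedes it below -/
import Mathlib

section
/- Let X be a finite metric space. If w : X → ℝ and v : X → ℝ are both weightings on X, then the total weights agree: ∑_{x∈X} w(x) = ∑_{x∈X} v(x). In particular, the magnitude of a finite metric space is independent of the choice of weighting. -/
theorem sum_eq_sum_of_symmetric_weightings {ι R : Type*} [Fintype ι] [CommSemiring R]
    (K : ι → ι → R) (hK : ∀ i j, K i j = K j i) (w v : ι → R)
    (hw : ∀ j, ∑ i, K i j * w i = 1) (hv : ∀ j, ∑ i, K i j * v i = 1) :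
    ∑ i, w i = ∑ i, v i :=
  calc ∑ j, w j
      = ∑ j, w j * ∑ i, K i j * v i := by simp only [hv, mul_one]
    _ = ∑ i, v i * ∑ j, K j i * w j := by
        simp only [Finset.mul_sum]
        rw [Finset.sum_comm]
        refine Finset.sum_congr rfl fun i _ => Finset.sum_congr rfl fun j _ => ?_
        rw [hK]; ring
    _ = ∑ i, v i := by simp only [hw, mul_one]

/-- If `w` and `v` are both weightings on a finite metric space `X`
(i.e. they satisfy the weight equation at every point), then their total
weights agree; hence the magnitude is independent of the weighting. -/
theorem magnitude_independent_of_weighting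
    {X : Type*} [MetricSpace X] [Fintype X]
    (w v : X → ℝ)
    (hw : ∀ x' : X, ∑ x : X, Real.exp (-dist x x') * w x = 1)
    (hv : ∀ x' : X, ∑ x : X, Real.exp (-dist x x') * v x = 1) :
    ∑ x : X, w x = ∑ x : X, v x :=
  sum_eq_sum_of_symmetric_weightings (fun x y => Real.exp (-dist x y))
    (fun x y => by rw [dist_comm]) w v hw hv
end

section
/- Let X be a finite homogeneous metric space, i.e. for every pair of points x, y ∈ X there is a bijective isometry σ : X → X with σ(x) = y. Fix any point x₀ ∈ X and set S = ∑_{y∈X} e^{−d(x₀,y)} (this quantity is independent of the choice of x₀). Then the constant function w ≡ 1/S is a weighting on X, and the magnitude of X equals |X| = N/S, where N is the number of points of X. -/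
open Finset

theorem IsometryEquiv.sum_comp_dist_left {X M : Type*} [PseudoMetricSpace X] [Fintype X]
    [AddCommMonoid M] (σ : X ≃ᵢ X) (f : ℝ → M) (x : X) :
    ∑ y, f (dist (σ x) y) = ∑ y, f (dist x y) := by
  rw [← σ.toEquiv.sum_comp]
  simp only [IsometryEquiv.coe_toEquiv, σ.dist_eq]

theorem sum_comp_dist_left_eq_of_transitive {X M : Type*} [PseudoMetricSpace X] [Fintype X]
    [AddCommMonoid M] (hhom : ∀ x y : X, ∃ σ : X ≃ᵢ X, σ x = y) (f : ℝ → M) (x x' : X) :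
    ∑ y, f (dist x' y) = ∑ y, f (dist x y) := by
  obtain ⟨σ, rfl⟩ := hhom x x'
  exact σ.sum_comp_dist_left f x

theorem sum_exp_neg_dist_pos {X : Type*} [PseudoMetricSpace X] [Fintype X] (x : X) :
    0 < ∑ y : X, Real.exp (-dist x y) :=
  sum_pos (fun _ _ => Real.exp_pos _) ⟨x, mem_univ x⟩

/-- For a finite homogeneous metric space `X`, the constant function
`w ≡ 1/S`, where `S = ∑ y, e^{-d(x₀,y)}` for any fixed point `x₀`,
is a weighting on `X`, and the magnitude of `X` is `N/S` where `N` is the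
number of points. -/
theorem magnitude_of_homogeneous
    {X : Type*} [MetricSpace X] [Fintype X]
    (hhom : ∀ x y : X, ∃ σ : X ≃ᵢ X, σ x = y)
    (x₀ : X) (S : ℝ) (hS : S = ∑ y : X, Real.exp (-dist x₀ y)) :
    (∀ x' : X, ∑ x : X, Real.exp (-dist x x') * (1 / S) = 1) ∧
    (∑ _x : X, (1 / S) = (Fintype.card X : ℝ) / S) := by
  have hS_pos : 0 < S := hS ▸ sum_exp_neg_dist_pos x₀
  refine ⟨fun x' => ?_, by rw [sum_const, card_univ, nsmul_eq_mul, mul_one_div]⟩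
  have hrow : ∑ x : X, Real.exp (-dist x x') = S := by
    simp_rw [dist_comm _ x', hS]
    exact sum_comp_dist_left_eq_of_transitive hhom (fun r => Real.exp (-r)) x₀ x'
  rw [← sum_mul, hrow, mul_one_div, div_self hS_pos.ne']
end

section
/- For every integer n ≥ 1, the scaled lattice sums of e^{−‖x‖} converge to the integral: as ε → 0⁺, εⁿ · ∑_{x∈ℤⁿ} e^{−ε‖x‖} → n! · ωₙ, where ωₙ is the Lebesgue volume of the unit ball in ℝⁿ. (In particular, for each ε > 0 the sum ∑_{x∈ℤⁿ} e^{−ε‖x‖} converges.) -/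
/-!
On the unit cube `{y : ⌊y⌋ = v}` of a lattice point `v` the norm `‖y‖` differs from `‖v‖` by at
most `√n`, and these cubes tile `ℝⁿ` with volume one: the coordinatewise floor pushes Lebesgue
measure forward to counting measure on `ℤⁿ`. Hence the lattice sum is the integral of a function
squeezed between `e^{∓ε√n} e^{-ε‖y‖}`. By scaling and the Gamma-function formula for the volume of
the unit ball, `εⁿ ∫ e^{-ε‖y‖} dy = n! ωₙ`, so `εⁿ ∑ e^{-ε‖v‖}` lies between `e^{∓ε√n} n! ωₙ`.
-/

open MeasureTheory Filter

/-- The point of Euclidean space `ℝⁿ` corresponding to a point of the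
integer lattice `ℤⁿ`. -/
noncomputable def latticePoint (n : ℕ) (x : Fin n → ℤ) : EuclideanSpace ℝ (Fin n) :=
  (WithLp.equiv 2 (Fin n → ℝ)).symm fun i => (x i : ℝ)

open Real Metric Module Topology Set

theorem exp_neg_mul_norm_eq_exp_neg_norm_smul {E : Type*} [SeminormedAddCommGroup E]
    [NormedSpace ℝ E] {ε : ℝ} (hε : 0 ≤ ε) (x : E) :
    exp (-(ε * ‖x‖)) = exp (-‖ε • x‖) := by
  rw [norm_smul, norm_of_nonneg hε]

theorem exp_neg_mul_norm_le_of_dist_le {E : Type*} [SeminormedAddCommGroup E] {ε r : ℝ}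
    (hε : 0 ≤ ε) {x y : E} (h : dist x y ≤ r) :
    exp (-(ε * ‖x‖)) ≤ exp (ε * r) * exp (-(ε * ‖y‖)) := by
  rw [← exp_add, exp_le_exp]
  have hyx : ‖y‖ ≤ ‖x‖ + r := by linarith [norm_sub_norm_le y x, dist_eq_norm' x y]
  linarith [mul_le_mul_of_nonneg_left hyx hε, mul_add ε ‖x‖ r]

section HaarIntegral

variable {E : Type*} [NormedAddCommGroup E] [NormedSpace ℝ E] [FiniteDimensional ℝ E]
  [MeasurableSpace E] [BorelSpace E] (μ : Measure E) [μ.IsAddHaarMeasure]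

theorem integral_exp_neg_norm :
    ∫ x, exp (-‖x‖) ∂μ = (finrank ℝ E).factorial * (μ (closedBall 0 1)).toReal := by
  have h := measure_unitBall_eq_integral_div_gamma μ zero_lt_one
  simp only [rpow_one, div_one, Gamma_nat_eq_factorial] at h
  rw [Measure.addHaar_unitClosedBall_eq_addHaar_unitBall, h,
    ENNReal.toReal_ofReal (div_nonneg (integral_nonneg fun _ => (exp_pos _).le) (by positivity))]
  field_simp

theorem integrable_exp_neg_norm : Integrable (fun x => exp (-‖x‖)) μ := by
  -- A non-integrable function would have integral `0`.
  refine Integrable.of_integral_ne_zero ?_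
  rw [integral_exp_neg_norm]
  have hball := ENNReal.toReal_pos (measure_closedBall_pos μ (0 : E) zero_lt_one).ne'
    measure_closedBall_lt_top.ne
  positivity

variable {μ} {ε : ℝ}

theorem integrable_exp_neg_mul_norm (hε : 0 < ε) :
    Integrable (fun x => exp (-(ε * ‖x‖))) μ := by
  simpa only [exp_neg_mul_norm_eq_exp_neg_norm_smul hε.le] using
    (integrable_exp_neg_norm μ).comp_smul hε.ne'

theorem pow_finrank_mul_integral_exp_neg_mul_norm (hε : 0 < ε) :
    ε ^ finrank ℝ E * ∫ x, exp (-(ε * ‖x‖)) ∂μ =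
      (finrank ℝ E).factorial * (μ (closedBall 0 1)).toReal := by
  simp only [exp_neg_mul_norm_eq_exp_neg_norm_smul hε.le]
  rw [Measure.integral_comp_smul_of_nonneg μ (fun x => exp (-‖x‖)) ε (hR := hε.le), smul_eq_mul,
    integral_exp_neg_norm, ← mul_assoc, mul_inv_cancel₀ (by positivity), one_mul]

end HaarIntegral

section LatticeFloor

variable {ι : Type*}

noncomputable def latticeFloor (y : EuclideanSpace ℝ ι) : ι → ℤ := fun i => ⌊y i⌋

theorem measurable_latticeFloor : Measurable (latticeFloor (ι := ι)) :=
  measurable_pi_lambda _ fun i => Int.measurable_floor.comp (by fun_prop)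

theorem preimage_latticeFloor_singleton (v : ι → ℤ) :
    latticeFloor ⁻¹' {v} =
      (MeasurableEquiv.toLp 2 (ι → ℝ)).symm ⁻¹' univ.pi fun i => Ico (v i : ℝ) (v i + 1) := by
  ext y
  simp [latticeFloor, funext_iff, Int.floor_eq_iff]

theorem map_latticeFloor_volume [Fintype ι] :
    (volume : Measure (EuclideanSpace ℝ ι)).map latticeFloor = Measure.count := by
  refine Measure.ext_of_singleton fun v => ?_
  rw [Measure.map_apply measurable_latticeFloor (measurableSet_singleton v),
    preimage_latticeFloor_singleton,
    (EuclideanSpace.volume_preserving_symm_measurableEquiv_toLp ι).measure_preimage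
      (MeasurableSet.univ_pi fun _ => measurableSet_Ico).nullMeasurableSet]
  simp [volume_pi_pi, Real.volume_Ico]

theorem hasSum_integral_comp_latticeFloor [Fintype ι] {F : Type*} [NormedAddCommGroup F]
    [NormedSpace ℝ F] [CompleteSpace F] {f : (ι → ℤ) → F} (hf : Integrable (f ∘ latticeFloor)) :
    HasSum f (∫ y, f (latticeFloor y)) := by
  have hfm : AEStronglyMeasurable f ((volume : Measure (EuclideanSpace ℝ ι)).map latticeFloor) :=
    StronglyMeasurable.of_discrete.aestronglyMeasurable
  have hf_count : Integrable f Measure.count := by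
    rwa [← map_latticeFloor_volume, integrable_map_measure hfm measurable_latticeFloor.aemeasurable]
  rw [← integral_map measurable_latticeFloor.aemeasurable hfm, map_latticeFloor_volume,
    integral_countable hf_count]
  have hsum : Summable f := (integrable_count_iff.mp hf_count : Summable (‖f ·‖)).of_norm
  simpa only [count_real_singleton, one_smul] using hsum.hasSum

end LatticeFloor

theorem dist_latticePoint_latticeFloor_le {n : ℕ} (y : EuclideanSpace ℝ (Fin n)) :
    dist y (latticePoint n (latticeFloor y)) ≤ √n := by
  rw [EuclideanSpace.dist_eq]
  refine sqrt_le_sqrt ?_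
  calc ∑ i, dist (y i) (latticePoint n (latticeFloor y) i) ^ 2 ≤ ∑ _i : Fin n, (1 : ℝ) := by
        refine Finset.sum_le_sum fun i _ => ?_
        have h : dist (y i) (latticePoint n (latticeFloor y) i) = Int.fract (y i) := by
          rw [Real.dist_eq, ← Int.self_sub_floor, abs_of_nonneg (Int.fract_nonneg _)]
          rfl
        rw [h, sq_le_one_iff₀ (Int.fract_nonneg _)]
        exact (Int.fract_lt_one _).le
    _ = n := by simp

section LatticeSum

variable {n : ℕ} {ε : ℝ}

theorem exp_neg_mul_norm_latticePoint_latticeFloor_le (hε : 0 ≤ ε)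
    (y : EuclideanSpace ℝ (Fin n)) :
    exp (-(ε * ‖latticePoint n (latticeFloor y)‖)) ≤ exp (ε * √n) * exp (-(ε * ‖y‖)) :=
  exp_neg_mul_norm_le_of_dist_le hε ((dist_comm _ _).trans_le (dist_latticePoint_latticeFloor_le y))

theorem exp_neg_mul_norm_le_latticePoint_latticeFloor (hε : 0 ≤ ε)
    (y : EuclideanSpace ℝ (Fin n)) :
    exp (-(ε * √n)) * exp (-(ε * ‖y‖)) ≤ exp (-(ε * ‖latticePoint n (latticeFloor y)‖)) := by
  rw [exp_neg (ε * √n), inv_mul_le_iff₀ (exp_pos _)]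
  exact exp_neg_mul_norm_le_of_dist_le hε (dist_latticePoint_latticeFloor_le y)

theorem integrable_exp_neg_mul_norm_latticePoint_latticeFloor (hε : 0 < ε) :
    Integrable fun y : EuclideanSpace ℝ (Fin n) =>
      exp (-(ε * ‖latticePoint n (latticeFloor y)‖)) := by
  have hmeas := (measurable_of_countable fun v => exp (-(ε * ‖latticePoint n v‖))).comp
    (measurable_latticeFloor (ι := Fin n))
  refine ((integrable_exp_neg_mul_norm hε).const_mul (exp (ε * √n))).mono'
    hmeas.aestronglyMeasurable (ae_of_all _ fun y => ?_)
  rw [norm_of_nonneg (exp_pos _).le]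
  exact exp_neg_mul_norm_latticePoint_latticeFloor_le hε.le y

theorem hasSum_exp_neg_mul_norm_latticePoint (hε : 0 < ε) :
    HasSum (fun v => exp (-(ε * ‖latticePoint n v‖)))
      (∫ y, exp (-(ε * ‖latticePoint n (latticeFloor y)‖))) :=
  hasSum_integral_comp_latticeFloor (integrable_exp_neg_mul_norm_latticePoint_latticeFloor hε)

theorem pow_mul_tsum_exp_neg_mul_norm_latticePoint_mem_Icc (hε : 0 < ε) :
    ε ^ n * ∑' v, exp (-(ε * ‖latticePoint n v‖)) ∈
      Icc
        (exp (-(ε * √n)) *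
          (n.factorial * (volume (closedBall (0 : EuclideanSpace ℝ (Fin n)) 1)).toReal))
        (exp (ε * √n) *
          (n.factorial * (volume (closedBall (0 : EuclideanSpace ℝ (Fin n)) 1)).toReal)) := by
  have hf := integrable_exp_neg_mul_norm (μ := (volume : Measure (EuclideanSpace ℝ (Fin n)))) hε
  have hg := integrable_exp_neg_mul_norm_latticePoint_latticeFloor (n := n) hε
  have hscale := pow_finrank_mul_integral_exp_neg_mul_norm
    (μ := (volume : Measure (EuclideanSpace ℝ (Fin n)))) hε
  rw [finrank_euclideanSpace_fin] at hscale
  have hlower : exp (-(ε * √n)) * ∫ y : EuclideanSpace ℝ (Fin n), exp (-(ε * ‖y‖)) ≤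
      ∫ y, exp (-(ε * ‖latticePoint n (latticeFloor y)‖)) := by
    rw [← integral_const_mul]
    exact integral_mono (hf.const_mul _) hg (exp_neg_mul_norm_le_latticePoint_latticeFloor hε.le)
  have hupper : ∫ y, exp (-(ε * ‖latticePoint n (latticeFloor y)‖)) ≤
      exp (ε * √n) * ∫ y : EuclideanSpace ℝ (Fin n), exp (-(ε * ‖y‖)) := by
    rw [← integral_const_mul]
    exact integral_mono hg (hf.const_mul _) (exp_neg_mul_norm_latticePoint_latticeFloor_le hε.le)
  rw [(hasSum_exp_neg_mul_norm_latticePoint hε).tsum_eq, ← hscale, mul_left_comm _ (ε ^ n),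
    mul_left_comm _ (ε ^ n)]
  have hεn : 0 ≤ ε ^ n := by positivity
  exact ⟨mul_le_mul_of_nonneg_left hlower hεn, mul_le_mul_of_nonneg_left hupper hεn⟩

end LatticeSum

theorem scaled_lattice_sum_tendsto_general (n : ℕ) :
    (∀ ε : ℝ, 0 < ε → Summable (fun x : Fin n → ℤ =>
      Real.exp (-(ε * ‖latticePoint n x‖)))) ∧
    Tendsto
      (fun ε : ℝ => ε ^ n * ∑' x : Fin n → ℤ,
        Real.exp (-(ε * ‖latticePoint n x‖)))
      (nhdsWithin 0 (Set.Ioi 0))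
      (nhds ((Nat.factorial n : ℝ) *
        (volume (Metric.closedBall (0 : EuclideanSpace ℝ (Fin n)) 1)).toReal)) := by
  refine ⟨fun ε hε => (hasSum_exp_neg_mul_norm_latticePoint hε).summable, ?_⟩
  set C := (n.factorial : ℝ) * (volume (closedBall (0 : EuclideanSpace ℝ (Fin n)) 1)).toReal
  have hlim (c : ℝ) : Tendsto (fun ε : ℝ => exp (ε * c) * C) (𝓝[>] 0) (𝓝 C) := by
    have : Continuous fun ε : ℝ => exp (ε * c) * C := by fun_prop
    simpa using (this.tendsto 0).mono_left nhdsWithin_le_nhds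
  refine tendsto_of_tendsto_of_tendsto_of_le_of_le' (hlim (-√n)) (hlim √n) ?_ ?_ <;>
    filter_upwards [self_mem_nhdsWithin] with ε hε
  · simpa only [mul_neg] using (pow_mul_tsum_exp_neg_mul_norm_latticePoint_mem_Icc hε).1
  · exact (pow_mul_tsum_exp_neg_mul_norm_latticePoint_mem_Icc hε).2

/-- For each `ε > 0` the lattice sum `∑_{x ∈ ℤⁿ} e^{-ε‖x‖}` converges, and the
scaled sums converge to the integral: `εⁿ · ∑_{x ∈ ℤⁿ} e^{-ε‖x‖} → n! · ωₙ`
as `ε → 0⁺`, where `ωₙ` is the Lebesgue volume of the unit ball in `ℝⁿ`. -/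
theorem scaled_lattice_sum_tendsto (n : ℕ) (hn : 1 ≤ n) :
    (∀ ε : ℝ, 0 < ε → Summable (fun x : Fin n → ℤ =>
      Real.exp (-(ε * ‖latticePoint n x‖)))) ∧
    Tendsto
      (fun ε : ℝ => ε ^ n * ∑' x : Fin n → ℤ,
        Real.exp (-(ε * ‖latticePoint n x‖)))
      (nhdsWithin 0 (Set.Ioi 0))
      (nhds ((Nat.factorial n : ℝ) *
        (volume (Metric.closedBall (0 : EuclideanSpace ℝ (Fin n)) 1)).toReal)) :=
  scaled_lattice_sum_tendsto_general n
end

section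
/- Let X be a finite metric space with N points and, for t > 0, let tX denote X with the metric scaled by the factor t. Then there exists t₀ > 0 such that for all t ≥ t₀ the matrix Z_t with entries (Z_t)_{xy} = e^{−t·d(x,y)} is invertible (so tX has a magnitude |tX| equal to the sum of the entries of Z_t^{−1}), and |tX| → N as t → ∞. -/
open Matrix Filter Topology

/-!
As `t → ∞` every off-diagonal entry `e^{-t d(x,y)}` of `Z_t = similarityMatrix X t` tends
to `0`, so `Z_t → 1`. Since the determinant and the matrix inverse are continuous near `1`,
`Z_t` is eventually invertible and `Z_t⁻¹ → 1`, whence the sum of the entries of `Z_t⁻¹`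
tends to that of the identity matrix, which is the number of points.
-/

namespace Matrix

variable {α n 𝕜 : Type*} [Fintype n] [DecidableEq n] [NormedField 𝕜]
  {l : Filter α} {A : α → Matrix n n 𝕜}

theorem eventually_isUnit_of_tendsto_one (h : Tendsto A l (𝓝 1)) :
    ∀ᶠ a in l, IsUnit (A a) := by
  have hdet : Tendsto (fun a => (A a).det) l (𝓝 1) := by
    simpa only [det_one, id, Function.comp_def] using (continuous_id.matrix_det.tendsto 1).comp h
  filter_upwards [hdet.eventually_ne one_ne_zero] with a ha
  exact (isUnit_iff_isUnit_det _).mpr ha.isUnit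

theorem tendsto_inv_of_tendsto_one (h : Tendsto A l (𝓝 1)) :
    Tendsto (fun a => (A a)⁻¹) l (𝓝 1) := by
  have hinv : ContinuousAt Inv.inv (1 : Matrix n n 𝕜) := by
    refine continuousAt_matrix_inv 1 ?_
    simpa only [det_one, Ring.inverse_eq_inv'] using continuousAt_inv₀ one_ne_zero
  simpa only [inv_one, Function.comp_def] using hinv.tendsto.comp h

end Matrix

noncomputable def similarityMatrix (X : Type*) [PseudoMetricSpace X] (t : ℝ) : Matrix X X ℝ :=
  Matrix.of fun x y => Real.exp (-(t * dist x y))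

theorem similarityMatrix_mulVec_apply {X : Type*} [PseudoMetricSpace X] [Fintype X]
    (t : ℝ) (w : X → ℝ) (x' : X) :
    (similarityMatrix X t *ᵥ w) x' = ∑ x, Real.exp (-(t * dist x x')) * w x := by
  simp only [mulVec, dotProduct, similarityMatrix, of_apply, dist_comm x']

theorem tendsto_similarityMatrix_atTop (X : Type*) [MetricSpace X] [DecidableEq X] :
    Tendsto (similarityMatrix X) atTop (𝓝 1) := by
  refine tendsto_pi_nhds.2 fun x => tendsto_pi_nhds.2 fun y => ?_
  rcases eq_or_ne x y with rfl | hxy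
  · simp [similarityMatrix]
  · have hdist : Tendsto (fun t : ℝ => t * dist x y) atTop atTop :=
      tendsto_id.atTop_mul_const (dist_pos.mpr hxy)
    simp only [similarityMatrix, of_apply, one_apply_ne hxy]
    exact Real.tendsto_exp_neg_atTop_nhds_zero.comp hdist

/-- For a finite metric space `X` with `N` points and `Z_t` the matrix of
exponentiated distances of the scaled space `tX`, there is `t₀ > 0` such that
for all `t ≥ t₀` the matrix `Z_t` is invertible (so `tX` has a weighting
`Z_t⁻¹ · 𝟙` and a magnitude equal to the sum of all entries of `Z_t⁻¹`), and
this magnitude tends to `N` as `t → ∞`. -/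
theorem magnitude_tendsto_card
    {X : Type*} [MetricSpace X] [Fintype X] [DecidableEq X]
    (Z : ℝ → Matrix X X ℝ)
    (hZ : ∀ (t : ℝ) (x y : X), Z t x y = Real.exp (-(t * dist x y))) :
    ∃ t₀ : ℝ, 0 < t₀ ∧
      (∀ t : ℝ, t₀ ≤ t → IsUnit (Z t)) ∧
      (∀ t : ℝ, t₀ ≤ t → ∀ x' : X,
        ∑ x : X, Real.exp (-(t * dist x x')) * ((Z t)⁻¹.mulVec 1) x = 1) ∧
      Tendsto (fun t : ℝ => ∑ x : X, ∑ y : X, (Z t)⁻¹ x y) atTop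
        (nhds (Fintype.card X : ℝ)) := by
  obtain rfl : Z = similarityMatrix X := funext fun t => Matrix.ext (hZ t)
  have hlim := tendsto_similarityMatrix_atTop X
  obtain ⟨t₀, ht₀⟩ :=
    ((eventually_gt_atTop 0).and (eventually_isUnit_of_tendsto_one hlim)).exists_forall_of_atTop
  refine ⟨t₀, (ht₀ t₀ le_rfl).1, fun t ht => (ht₀ t ht).2, fun t ht x' => ?_, ?_⟩
  · have hdet := (isUnit_iff_isUnit_det _).mp (ht₀ t ht).2
    rw [← similarityMatrix_mulVec_apply, mulVec_mulVec, mul_nonsing_inv _ hdet, one_mulVec]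
    rfl
  · have hsum : Continuous fun A : Matrix X X ℝ => ∑ x, ∑ y, A x y := by fun_prop
    simpa [one_apply, Function.comp_def] using
      (hsum.tendsto 1).comp (tendsto_inv_of_tendsto_one hlim)
end
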